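/- arXiv:1709.08004 — 2 statements merged into one kernel-verified Lean document; each statement's English description precedes it below -/
import Mathlib

section
/- The small-z asymptotic solution of 2z = (1 + θz)² − (1 + (1-θ)z)^{-2} has leading coefficients θ' = (3 − √3)/2 and θ'' = (−9 + 5√3)/6; that is, substituting θ(z) = θ' + θ'' z into F(θ,z) := (1 + θz)² − (1 + (1-θ)z)^{-2} − 2z yields F = O(z³) as z → 0. -/
/-!
Clearing the denominator, `F(θ, z) = 0` becomes `((1 + θz)² - 2z)(1 + (1 - θ)z)² = 1`. For the
linear ansatz `θ = a + bz` the left side minus one is a polynomial in `z` with no terms of degree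
`0` and `1`, whose `z²`-coefficient vanishes iff `2a² - 6a + 3 = 0` and whose `z³`-coefficient then
vanishes iff `(3 - 2a) b = 3a - 2`. These are solved by `a = (3 - √3)/2`, `b = (-9 + 5√3)/6`, and
then `F` is `z⁴` times a function continuous at `0`, so even `F = O(z⁴)`.
-/

open Asymptotics Filter Topology

noncomputable def varianceDefect (θ z : ℝ) : ℝ :=
  (1 + θ * z) ^ 2 - ((1 + (1 - θ) * z) ^ 2)⁻¹ - 2 * z

lemma varianceDefect_eq_div (θ z : ℝ) (h : 1 + (1 - θ) * z ≠ 0) :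
    varianceDefect θ z
      = (((1 + θ * z) ^ 2 - 2 * z) * (1 + (1 - θ) * z) ^ 2 - 1) / (1 + (1 - θ) * z) ^ 2 := by
  rw [sub_div, mul_div_cancel_right₀ _ (pow_ne_zero 2 h), one_div, varianceDefect]
  ring

section LinearAnsatz

variable (a b : ℝ)

def defectCofactor (z : ℝ) : ℝ :=
  -2 * b ^ 2 - 8 * a * b + 6 * b + a ^ 2 - 2 * a ^ 3 + a ^ 4
    + (-4 * b ^ 2 - 6 * a ^ 2 * b + 4 * a ^ 3 * b + 2 * a * b) * z
    + (6 * a ^ 2 * b ^ 2 - 6 * a * b ^ 2 + b ^ 2) * z ^ 2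
    + (4 * a * b ^ 3 - 2 * b ^ 3) * z ^ 3 + b ^ 4 * z ^ 4

lemma cleared_defect_eq (z : ℝ) :
    ((1 + (a + b * z) * z) ^ 2 - 2 * z) * (1 + (1 - (a + b * z)) * z) ^ 2 - 1
      = -(2 * a ^ 2 - 6 * a + 3) * z ^ 2 * (1 + 2 * z)
        + 2 * ((3 - 2 * a) * b - (3 * a - 2)) * z ^ 3 + z ^ 4 * defectCofactor a b z := by
  unfold defectCofactor
  ring

lemma cleared_defect_eq_of_coeffs (ha : 2 * a ^ 2 - 6 * a + 3 = 0)
    (hb : (3 - 2 * a) * b = 3 * a - 2) (z : ℝ) :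
    ((1 + (a + b * z) * z) ^ 2 - 2 * z) * (1 + (1 - (a + b * z)) * z) ^ 2 - 1
      = z ^ 4 * defectCofactor a b z := by
  rw [cleared_defect_eq, ha, hb]
  ring

lemma varianceDefect_linear_isBigO (ha : 2 * a ^ 2 - 6 * a + 3 = 0)
    (hb : (3 - 2 * a) * b = 3 * a - 2) :
    (fun z => varianceDefect (a + b * z) z) =O[𝓝 0] (fun z => z ^ 4) := by
  have hbase_cont : Continuous fun z => 1 + (1 - (a + b * z)) * z := by fun_prop
  have hbase0 : 1 + (1 - (a + b * 0)) * 0 ≠ 0 := by simp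
  have hquot : (fun z => defectCofactor a b z / (1 + (1 - (a + b * z)) * z) ^ 2)
      =O[𝓝 0] (fun _ => (1 : ℝ)) := by
    have hcofactor : Continuous (defectCofactor a b) := by unfold defectCofactor; fun_prop
    exact (hcofactor.continuousAt.div (hbase_cont.pow 2).continuousAt
      (pow_ne_zero 2 hbase0)).tendsto.isBigO_one ℝ
  refine ((isBigO_refl (fun z : ℝ => z ^ 4) _).mul hquot).congr' ?_ (by simp)
  filter_upwards [hbase_cont.continuousAt.eventually_ne hbase0] with z hz
  rw [varianceDefect_eq_div _ _ hz, cleared_defect_eq_of_coeffs a b ha hb z, mul_div_assoc]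

end LinearAnsatz

lemma theta_leading_coeff : 2 * ((3 - √3) / 2) ^ 2 - 6 * ((3 - √3) / 2) + 3 = 0 := by
  linear_combination (1 / 2) * Real.sq_sqrt (show (0 : ℝ) ≤ 3 by norm_num)

lemma theta_next_coeff :
    (3 - 2 * ((3 - √3) / 2)) * ((-9 + 5 * √3) / 6) = 3 * ((3 - √3) / 2) - 2 := by
  linear_combination (5 / 6) * Real.sq_sqrt (show (0 : ℝ) ≤ 3 by norm_num)

theorem stmt_9 :
    (fun z : ℝ =>
        (1 + ((3 - Real.sqrt 3) / 2 + (-9 + 5 * Real.sqrt 3) / 6 * z) * z) ^ 2 -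
          ((1 + (1 - ((3 - Real.sqrt 3) / 2 + (-9 + 5 * Real.sqrt 3) / 6 * z)) * z) ^ 2)⁻¹ -
          2 * z)
      =O[nhdsWithin 0 (Set.Ioi 0)] (fun z : ℝ => z ^ 3) :=
  ((varianceDefect_linear_isBigO _ _ theta_leading_coeff theta_next_coeff).trans
    (isLittleO_pow_pow (by norm_num : 3 < 4)).isBigO).mono nhdsWithin_le_nhds
end

section
/- For the theta scheme applied to the isomerization test problem with |A| < 1, the limiting variance v∞ satisfies v∞ = A(λτ)·Var[X*] where A(λτ) = 2/(2 + λ(2θ-1)τ), Var[X*] = c1 c2 x_T/λ², λ = c1 + c2. In particular θ < 1/2 implies v∞ > Var[X*] (underdamped) and θ > 1/2 implies v∞ < Var[X*] (overdamped). -/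
/-!
The mean recurrence is affine with factor `a = (1 - λ(1-θ)τ)/(1 + λθτ)`, and the stability
condition is exactly `a > -1`, so `|a| < 1` and the mean converges to its fixed point
`c₂ x_T / λ`. Passing to the limit in the variance recurrence gives `v∞ (1 - a²) = …`;
since `1 - a² = λτ(2 + λ(2θ-1)τ)/(1 + λθτ)²`, solving for `v∞` yields the factor
`2 / (2 + λ(2θ-1)τ)`, which is `> 1` or `< 1` according to the sign of `2θ - 1`.
-/

open Filter Topology

theorem tendsto_of_affine_recurrence {𝕜 : Type*} [NormedField 𝕜] {a b : 𝕜} {x : ℕ → 𝕜}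
    (ha : ‖a‖ < 1) (hx : ∀ n, x (n + 1) = a * x n + b) :
    Tendsto x atTop (𝓝 (b / (1 - a))) := by
  set L := b / (1 - a)
  have hfix : a * L + b = L := by
    have : 1 - a ≠ 0 := fun h => by
      rw [sub_eq_zero] at h; rw [← h, norm_one] at ha; exact lt_irrefl _ ha
    simp only [L]; field_simp; ring
  have hclosed : ∀ n, x n = a ^ n * (x 0 - L) + L := by
    intro n
    induction n with
    | zero => simp
    | succ k ih => rw [hx, ih, pow_succ]; linear_combination hfix
  have hpow := tendsto_pow_atTop_nhds_zero_of_norm_lt_one ha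
  have hlim := (hpow.mul_const (x 0 - L)).add_const L
  rw [zero_mul, zero_add] at hlim
  exact hlim.congr fun n => (hclosed n).symm

theorem eq_of_tendsto_of_recurrence {R : Type*} [TopologicalSpace R] [T2Space R] [Semiring R]
    [IsTopologicalSemiring R] {v m : ℕ → R} {V M p q r : R}
    (hv : Tendsto v atTop (𝓝 V)) (hm : Tendsto m atTop (𝓝 M))
    (hrec : ∀ n, v (n + 1) = p * v n + q * m n + r) :
    V = p * V + q * M + r := by
  refine tendsto_nhds_unique ((tendsto_add_atTop_iff_nat 1).2 hv) ?_
  simpa only [hrec] using ((hv.const_mul p).add (hm.const_mul q)).add_const r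

theorem abs_thetaFactor_lt_one {lam tau theta : ℝ} (hlam : 0 < lam) (htau : 0 < tau)
    (htheta : 0 ≤ theta) (hstab : lam * tau * (1 - 2 * theta) < 2) :
    |(1 - lam * (1 - theta) * tau) / (1 + lam * theta * tau)| < 1 := by
  have hD : 0 < 1 + lam * theta * tau := by positivity
  rw [abs_div, abs_of_pos hD, div_lt_one hD, abs_lt]
  constructor <;> nlinarith [mul_pos hlam htau]

theorem thetaScheme_mean_fixedPoint {lam tau theta c2 xT : ℝ} (hlam : 0 < lam) (htau : 0 < tau)
    (htheta : 0 ≤ theta) :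
    c2 * xT * tau / (1 + lam * theta * tau) /
        (1 - (1 - lam * (1 - theta) * tau) / (1 + lam * theta * tau)) = c2 * xT / lam := by
  have hD : 0 < 1 + lam * theta * tau := by positivity
  have : 1 + lam * theta * tau - (1 - lam * (1 - theta) * tau) = lam * tau := by ring
  rw [one_sub_div hD.ne', div_div_div_cancel_right₀ hD.ne', this]
  field_simp

theorem thetaScheme_variance_fixedPoint {c1 c2 xT tau theta V : ℝ} (hc1 : 0 < c1) (hc2 : 0 < c2)
    (htau : 0 < tau) (htheta : 0 ≤ theta) (hstab : (c1 + c2) * tau * (1 - 2 * theta) < 2)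
    (hV : V = ((1 - (c1 + c2) * (1 - theta) * tau) / (1 + (c1 + c2) * theta * tau)) ^ 2 * V +
        (c1 - c2) * tau / (1 + (c1 + c2) * theta * tau) ^ 2 * (c2 * xT / (c1 + c2)) +
        c2 * xT * tau / (1 + (c1 + c2) * theta * tau) ^ 2) :
    V = 2 / (2 + (c1 + c2) * (2 * theta - 1) * tau) * (c1 * c2 * xT / (c1 + c2) ^ 2) := by
  have hD : 0 < 1 + (c1 + c2) * theta * tau := by positivity
  have hE : 0 < 2 + (c1 + c2) * (2 * theta - 1) * tau := by linarith
  field_simp at hV ⊢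
  rw [eq_div_iff (by linarith)]
  refine mul_right_cancel₀ htau.ne' ?_
  linear_combination hV

theorem stmt_15 (c1 c2 xT tau theta : ℝ) (hc1 : 0 < c1) (hc2 : 0 < c2)
    (hxT : 0 < xT) (htau : 0 < tau) (htheta : theta ∈ Set.Icc (0 : ℝ) 1)
    (hstab : (c1 + c2) * tau * (1 - 2 * theta) < 2)
    (m v : ℕ → ℝ) (vinf : ℝ)
    (hm : ∀ n, m (n + 1) =
      (1 - (c1 + c2) * (1 - theta) * tau) / (1 + (c1 + c2) * theta * tau) * m n +
        c2 * xT * tau / (1 + (c1 + c2) * theta * tau))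
    (hv : ∀ n, v (n + 1) =
      ((1 - (c1 + c2) * (1 - theta) * tau) / (1 + (c1 + c2) * theta * tau)) ^ 2 * v n +
        (c1 - c2) * tau / (1 + (c1 + c2) * theta * tau) ^ 2 * m n +
        c2 * xT * tau / (1 + (c1 + c2) * theta * tau) ^ 2)
    (hlim : Filter.Tendsto v Filter.atTop (nhds vinf)) :
    vinf = 2 / (2 + (c1 + c2) * (2 * theta - 1) * tau) *
        (c1 * c2 * xT / (c1 + c2) ^ 2) ∧
      (theta < 1 / 2 → vinf > c1 * c2 * xT / (c1 + c2) ^ 2) ∧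
      (theta > 1 / 2 → vinf < c1 * c2 * xT / (c1 + c2) ^ 2) := by
  have hlam : 0 < c1 + c2 := add_pos hc1 hc2
  have hmean : Tendsto m atTop (𝓝 (c2 * xT / (c1 + c2))) := by
    rw [← thetaScheme_mean_fixedPoint hlam htau htheta.1]
    exact tendsto_of_affine_recurrence
      (abs_thetaFactor_lt_one hlam htau htheta.1 hstab) hm
  have hvinf := thetaScheme_variance_fixedPoint hc1 hc2 htau htheta.1 hstab
    (eq_of_tendsto_of_recurrence hlim hmean hv)
  have hVar : 0 < c1 * c2 * xT / (c1 + c2) ^ 2 := by positivity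
  have hE : 0 < 2 + (c1 + c2) * (2 * theta - 1) * tau := by linarith
  refine ⟨hvinf, fun hθ => ?_, fun hθ => ?_⟩
  · have hA : 1 < 2 / (2 + (c1 + c2) * (2 * theta - 1) * tau) := by
      rw [one_lt_div hE]
      have hneg : 2 * theta - 1 < 0 := by linarith
      linarith [mul_neg_of_neg_of_pos (mul_neg_of_pos_of_neg hlam hneg) htau]
    rw [hvinf]; exact lt_mul_of_one_lt_left hVar hA
  · have hA : 2 / (2 + (c1 + c2) * (2 * theta - 1) * tau) < 1 := by
      rw [div_lt_one hE]
      have hpos : 0 < 2 * theta - 1 := by linarith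
      linarith [mul_pos (mul_pos hlam hpos) htau]
    rw [hvinf]; exact mul_lt_of_lt_one_left hVar hA
end
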